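/- arXiv:1910.14325 — 9 statements merged into one kernel-verified Lean document; each statement's English description precedes it below -/
import Mathlib

section
/- Suppose there exists an index n ≥ 1 such that condition C1 holds at every iteration k ≥ n. Then for all k ≥ n, Δ_{k+1} ≤ c / (√(ρ_n) · (√γ)^{k−n}). In particular, the residuals are eventually bounded by a decaying geometric sequence with ratio 1/√γ. -/
/-- If condition `C1` (`Δ (k+1) ≥ η * Δ k`) holds at every iteration
`k ≥ n` for some `n ≥ 1`, then for all `k ≥ n`,
`Δ (k+1) ≤ c / (√(ρ n) * (√γ)^(k − n))`. -/
theorem residual_geometric_bound_case_S1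
    (Δ ρ : ℕ → ℝ) (γ η c : ℝ)
    (hΔpos : ∀ k, 1 ≤ k → 0 < Δ k) (hρpos : ∀ k, 1 ≤ k → 0 < ρ k)
    (hγ : 1 < γ) (hη0 : 0 < η) (hη1 : η < 1) (hc : 0 < c)
    (hrule1 : ∀ k, 1 ≤ k → η * Δ k ≤ Δ (k + 1) → ρ (k + 1) = γ * ρ k)
    (hrule2 : ∀ k, 1 ≤ k → Δ (k + 1) < η * Δ k → ρ (k + 1) = ρ k)
    (hlem : ∀ k, 1 ≤ k → η * Δ k ≤ Δ (k + 1) → Δ (k + 1) ≤ c / Real.sqrt (ρ k))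
    (n : ℕ) (hn : 1 ≤ n)
    (hC1 : ∀ k, n ≤ k → η * Δ k ≤ Δ (k + 1)) :
    ∀ k, n ≤ k → Δ (k + 1) ≤ c / (Real.sqrt (ρ n) * (Real.sqrt γ) ^ (k - n)) := by
  have hγ0 : (0:ℝ) ≤ γ := le_of_lt (lt_trans one_pos hγ)
  have hρ : ∀ k, n ≤ k → ρ k = γ ^ (k - n) * ρ n := by
    intro k hk
    induction k with
    | zero => omega
    | succ k ih =>
      rcases Nat.lt_or_ge n (k + 1) with h | h
      · have hk' : n ≤ k := by omega
        have h1 : 1 ≤ k := by omega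
        rw [hrule1 k h1 (hC1 k hk'), ih hk', show k + 1 - n = (k - n) + 1 by omega,
          pow_succ]
        ring
      · have : n = k + 1 := by omega
        simp [this]
  intro k hk
  have hρk : ρ k = γ ^ (k - n) * ρ n := hρ k hk
  have hbd := hlem k (le_trans hn hk) (hC1 k hk)
  have hsp : Real.sqrt (γ ^ (k - n)) = Real.sqrt γ ^ (k - n) := by
    induction (k - n) with
    | zero => simp
    | succ m ih => rw [pow_succ, pow_succ, Real.sqrt_mul (pow_nonneg hγ0 _), ih]
  rw [hρk, Real.sqrt_mul (pow_nonneg hγ0 _), hsp] at hbd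
  rwa [mul_comm] at hbd
end

section
/- Suppose there exists an index n ≥ 2 such that condition C1 holds at iteration n−1 and condition C2 holds at every iteration k ≥ n. Then for all k ≥ n, Δ_{k+1} ≤ (c/√(ρ_{n−1})) · η^{k+1−n}. In particular, the residuals are eventually bounded by a decaying geometric sequence with ratio η. -/
/-- If condition `C1` (`Δ (k+1) ≥ η * Δ k`) holds at iteration `n − 1`
(where `n ≥ 2`) and condition `C2` (`Δ (k+1) < η * Δ k`) holds at every iteration `k ≥ n`,
then for all `k ≥ n`, `Δ (k+1) ≤ (c / √(ρ (n−1))) * η^(k+1−n)`. -/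
theorem residual_geometric_bound_case_S2
    (Δ ρ : ℕ → ℝ) (γ η c : ℝ)
    (hΔpos : ∀ k, 1 ≤ k → 0 < Δ k) (hρpos : ∀ k, 1 ≤ k → 0 < ρ k)
    (hγ : 1 < γ) (hη0 : 0 < η) (hη1 : η < 1) (hc : 0 < c)
    (hrule1 : ∀ k, 1 ≤ k → η * Δ k ≤ Δ (k + 1) → ρ (k + 1) = γ * ρ k)
    (hrule2 : ∀ k, 1 ≤ k → Δ (k + 1) < η * Δ k → ρ (k + 1) = ρ k)
    (hlem : ∀ k, 1 ≤ k → η * Δ k ≤ Δ (k + 1) → Δ (k + 1) ≤ c / Real.sqrt (ρ k))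
    (n : ℕ) (hn : 2 ≤ n)
    (hC1 : η * Δ (n - 1) ≤ Δ (n - 1 + 1))
    (hC2 : ∀ k, n ≤ k → Δ (k + 1) < η * Δ k) :
    ∀ k, n ≤ k → Δ (k + 1) ≤ (c / Real.sqrt (ρ (n - 1))) * η ^ (k + 1 - n) := by
  have hn1 : 1 ≤ n - 1 := by omega
  have hΔn : Δ n ≤ c / Real.sqrt (ρ (n - 1)) := by
    have := hlem (n - 1) hn1 hC1
    have h : n - 1 + 1 = n := by omega
    rwa [h] at this
  intro k hk
  induction k, hk using Nat.le_induction with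
  | base =>
    have h1 : n + 1 - n = 1 := by omega
    rw [h1, pow_one]
    calc Δ (n + 1) ≤ η * Δ n := (hC2 n le_rfl).le
      _ ≤ η * (c / Real.sqrt (ρ (n - 1))) := by
          exact mul_le_mul_of_nonneg_left hΔn hη0.le
      _ = (c / Real.sqrt (ρ (n - 1))) * η := by ring
  | succ k hkn ih =>
    have h1 : k + 1 + 1 - n = (k + 1 - n) + 1 := by omega
    rw [h1, pow_succ]
    calc Δ (k + 1 + 1) ≤ η * Δ (k + 1) := (hC2 (k + 1) (by omega)).le
      _ ≤ η * ((c / Real.sqrt (ρ (n - 1))) * η ^ (k + 1 - n)) := by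
          exact mul_le_mul_of_nonneg_left ih hη0.le
      _ = (c / Real.sqrt (ρ (n - 1))) * (η ^ (k + 1 - n) * η) := by ring
end

section
/- Suppose that at least one of the two conditions C1, C2 holds at only finitely many iterations (i.e., either C2 holds for finitely many k, or C1 holds for finitely many k). Then there exist a constant A > 0, a rate β with 0 < β < 1, and an index n such that Δ_{k+1} ≤ A·β^k for all k ≥ n. -/
/-- If at least one of the two conditions `C1`, `C2` holds at only
finitely many iterations, then there exist `A > 0`, a rate `β ∈ (0,1)` and an index `n`
such that `Δ (k+1) ≤ A * β^k` for all `k ≥ n`. -/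
theorem residual_eventual_geometric_bound
    (Δ ρ : ℕ → ℝ) (γ η c : ℝ)
    (hΔpos : ∀ k, 1 ≤ k → 0 < Δ k) (hρpos : ∀ k, 1 ≤ k → 0 < ρ k)
    (hγ : 1 < γ) (hη0 : 0 < η) (hη1 : η < 1) (hc : 0 < c)
    (hrule1 : ∀ k, 1 ≤ k → η * Δ k ≤ Δ (k + 1) → ρ (k + 1) = γ * ρ k)
    (hrule2 : ∀ k, 1 ≤ k → Δ (k + 1) < η * Δ k → ρ (k + 1) = ρ k)
    (hlem : ∀ k, 1 ≤ k → η * Δ k ≤ Δ (k + 1) → Δ (k + 1) ≤ c / Real.sqrt (ρ k))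
    (hfin : {k : ℕ | 1 ≤ k ∧ Δ (k + 1) < η * Δ k}.Finite ∨
            {k : ℕ | 1 ≤ k ∧ η * Δ k ≤ Δ (k + 1)}.Finite) :
    ∃ A > 0, ∃ β : ℝ, 0 < β ∧ β < 1 ∧ ∃ n : ℕ, ∀ k, n ≤ k → Δ (k + 1) ≤ A * β ^ k := by
  have hγ0 : (0:ℝ) < γ := lt_trans one_pos hγ
  obtain hC2 | hC1 := hfin
  · -- C2 finite: eventually C1 holds
    obtain ⟨m, hm⟩ := hC2.bddAbove
    set N := m + 1 with hNdef
    have hN1 : 1 ≤ N := Nat.le_add_left 1 m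
    have hAll : ∀ k, N ≤ k → η * Δ k ≤ Δ (k + 1) := by
      intro k hk
      by_contra h
      push_neg at h
      have hmem : k ∈ {k : ℕ | 1 ≤ k ∧ Δ (k + 1) < η * Δ k} := ⟨le_trans hN1 hk, h⟩
      have := hm hmem
      omega
    have hsγ : 1 < Real.sqrt γ := by
      rw [show (1:ℝ) = Real.sqrt 1 by simp]
      exact Real.sqrt_lt_sqrt (by norm_num) hγ
    have hsγ0 : 0 < Real.sqrt γ := lt_trans one_pos hsγ
    set β : ℝ := (Real.sqrt γ)⁻¹ with hβdef
    have hβ0 : 0 < β := inv_pos.mpr hsγ0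
    have hβ1 : β < 1 := inv_lt_one_of_one_lt₀ hsγ
    have hρN : 0 < ρ N := hρpos N hN1
    have hsρN : 0 < Real.sqrt (ρ N) := Real.sqrt_pos.mpr hρN
    have hinv : ∀ k, N ≤ k → Real.sqrt (ρ k) * β ^ k = Real.sqrt (ρ N) * β ^ N := by
      intro k hk
      induction k, hk using Nat.le_induction with
      | base => rfl
      | succ k hk ih =>
        have hk1 : 1 ≤ k := le_trans hN1 hk
        have hρeq : ρ (k + 1) = γ * ρ k := hrule1 k hk1 (hAll k hk)
        have hone : Real.sqrt γ * β = 1 := mul_inv_cancel₀ (ne_of_gt hsγ0)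
        rw [hρeq, Real.sqrt_mul hγ0.le, pow_succ]
        calc Real.sqrt γ * Real.sqrt (ρ k) * (β ^ k * β)
            = (Real.sqrt γ * β) * (Real.sqrt (ρ k) * β ^ k) := by ring
          _ = Real.sqrt (ρ N) * β ^ N := by rw [hone, one_mul, ih]
    refine ⟨c / (Real.sqrt (ρ N) * β ^ N), by positivity, β, hβ0, hβ1, N, ?_⟩
    intro k hk
    have hk1 : 1 ≤ k := le_trans hN1 hk
    have hρk : 0 < ρ k := hρpos k hk1
    have hsρk : 0 < Real.sqrt (ρ k) := Real.sqrt_pos.mpr hρk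
    have hbound := hlem k hk1 (hAll k hk)
    have heq : c / Real.sqrt (ρ k) = c / (Real.sqrt (ρ N) * β ^ N) * β ^ k := by
      have h := hinv k hk
      rw [div_mul_eq_mul_div, div_eq_div_iff hsρk.ne' (by positivity)]
      linear_combination (-c) * h
    linarith [hbound, heq.le]
  · -- C1 finite: eventually C2 holds
    obtain ⟨m, hm⟩ := hC1.bddAbove
    set N := m + 1 with hNdef
    have hN1 : 1 ≤ N := Nat.le_add_left 1 m
    have hAll : ∀ k, N ≤ k → Δ (k + 1) < η * Δ k := by
      intro k hk
      by_contra h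
      push_neg at h
      have hmem : k ∈ {k : ℕ | 1 ≤ k ∧ η * Δ k ≤ Δ (k + 1)} := ⟨le_trans hN1 hk, h⟩
      have := hm hmem
      omega
    have hΔN : 0 < Δ (N + 1) := hΔpos (N + 1) (by omega)
    refine ⟨Δ (N + 1) / η ^ N, by positivity, η, hη0, hη1, N, ?_⟩
    intro k hk
    induction k, hk using Nat.le_induction with
    | base =>
      have : Δ (N + 1) / η ^ N * η ^ N = Δ (N + 1) := by
        field_simp
      linarith
    | succ k hk ih =>
      have hstep := hAll (k + 1) (by omega)
      have hηk := ih
      calc Δ (k + 1 + 1) ≤ η * Δ (k + 1) := le_of_lt hstep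
        _ ≤ η * (Δ (N + 1) / η ^ N * η ^ k) := by
            exact mul_le_mul_of_nonneg_left hηk hη0.le
        _ = Δ (N + 1) / η ^ N * η ^ (k + 1) := by ring
end

section
/- Let n < m be indices such that condition C1 holds at each of the iterations n, n+1, …, m−1. Then ρ_k = γ^{k−n}·ρ_n for all k with n ≤ k ≤ m, and consequently, setting α = 1/√γ, one has Δ_k ≤ c·ρ_n^{−1/2}·α^{k−n−1} for every k with n+1 ≤ k ≤ m. -/
/-- If condition `C1` holds at iterations `n, n+1, …, m−1` (with `n < m`),
then `ρ k = γ^(k−n) * ρ n` for `n ≤ k ≤ m`, and consequently, with `α = 1/√γ`,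
`Δ k ≤ c * (ρ n)^(−1/2) * α^(k−n−1)` for `n+1 ≤ k ≤ m`. -/
theorem residual_bound_on_C1_run
    (Δ ρ : ℕ → ℝ) (γ η c : ℝ)
    (hΔpos : ∀ k, 1 ≤ k → 0 < Δ k) (hρpos : ∀ k, 1 ≤ k → 0 < ρ k)
    (hγ : 1 < γ) (hη0 : 0 < η) (hη1 : η < 1) (hc : 0 < c)
    (hrule1 : ∀ k, 1 ≤ k → η * Δ k ≤ Δ (k + 1) → ρ (k + 1) = γ * ρ k)
    (hrule2 : ∀ k, 1 ≤ k → Δ (k + 1) < η * Δ k → ρ (k + 1) = ρ k)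
    (hlem : ∀ k, 1 ≤ k → η * Δ k ≤ Δ (k + 1) → Δ (k + 1) ≤ c / Real.sqrt (ρ k))
    (n m : ℕ) (hn : 1 ≤ n) (hnm : n < m)
    (hC1 : ∀ k, n ≤ k → k < m → η * Δ k ≤ Δ (k + 1)) :
    (∀ k, n ≤ k → k ≤ m → ρ k = γ ^ (k - n) * ρ n) ∧
    (∀ k, n + 1 ≤ k → k ≤ m →
      Δ k ≤ c * (ρ n) ^ (-(1 / 2) : ℝ) * (1 / Real.sqrt γ) ^ (k - n - 1)) := by
  have hγ0 : (0:ℝ) < γ := lt_trans one_pos hγ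
  have hρn : 0 < ρ n := hρpos n hn
  have hfirst : ∀ k, n ≤ k → k ≤ m → ρ k = γ ^ (k - n) * ρ n := by
    intro k hk hkm
    induction k with
    | zero => omega
    | succ j ih =>
      rcases Nat.lt_or_ge n (j+1) with h | h
      · have hnj : n ≤ j := by omega
        have hjm : j < m := by omega
        have := hrule1 j (le_trans hn hnj) (hC1 j hnj hjm)
        rw [this, ih hnj (le_of_lt hjm)]
        have : j + 1 - n = (j - n) + 1 := by omega
        rw [this, pow_succ]
        ring
      · have : n = j + 1 := by omega
        subst this
        simp
  refine ⟨hfirst, ?_⟩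
  intro k hk hkm
  obtain ⟨j, rfl⟩ : ∃ j, k = j + 1 := ⟨k - 1, by omega⟩
  have hnj : n ≤ j := by omega
  have hjm : j < m := by omega
  have h1 : Δ (j + 1) ≤ c / Real.sqrt (ρ j) :=
    hlem j (le_trans hn hnj) (hC1 j hnj hjm)
  have hρj : ρ j = γ ^ (j - n) * ρ n := hfirst j hnj (le_of_lt hjm)
  have hsqpow : ∀ N : ℕ, Real.sqrt (γ ^ N) = Real.sqrt γ ^ N := by
    intro N
    induction N with
    | zero => simp
    | succ i ih => rw [pow_succ, pow_succ, Real.sqrt_mul (by positivity), ih]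
  have hsq : Real.sqrt (ρ j) = Real.sqrt γ ^ (j - n) * Real.sqrt (ρ n) := by
    rw [hρj, Real.sqrt_mul (by positivity), hsqpow]
  have hsγ : 0 < Real.sqrt γ := Real.sqrt_pos.mpr hγ0
  have hsρn : 0 < Real.sqrt (ρ n) := Real.sqrt_pos.mpr hρn
  have hrpow : (ρ n) ^ (-(1 / 2) : ℝ) = 1 / Real.sqrt (ρ n) := by
    rw [Real.rpow_neg (le_of_lt hρn), ← Real.sqrt_eq_rpow, one_div]
  have hidx : j + 1 - n - 1 = j - n := by omega
  rw [hidx, hrpow]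
  calc Δ (j + 1) ≤ c / Real.sqrt (ρ j) := h1
    _ = c * (1 / Real.sqrt (ρ n)) * (1 / Real.sqrt γ) ^ (j - n) := by
        rw [hsq, one_div, one_div, inv_pow, div_eq_mul_inv, mul_inv]
        ring
end

section
/- Suppose that both condition C1 and condition C2 hold at infinitely many iterations. Then there exists a piecewise geometric sequence (y_k)_{k≥1} with rate β = max{1/√γ, η} such that Δ_k ≤ y_k for all k ≥ 1. -/
/-!
Let `N 0 < N 1 < ⋯` enumerate the iterations at which `C1` holds. Between two consecutive
ones only `C2` holds, so `ρ` stays constant there and `Δ` contracts by `η ≤ β` at each step;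
at each of them `ρ` is multiplied by `γ`, so `ρ (N j) = ρ 1 * γ ^ j` and the peak
`Δ (N j + 1) ≤ c / √(ρ (N j))` is at most `C * (1 / √γ) ^ j ≤ C * β ^ j` with
`C = c / √(ρ 1)`. The sequence that equals `C * β ^ j * β ^ (k - N j - 1)` on the chunk
`N j < k ≤ N (j + 1)`, and `Δ` itself before `N 0`, is therefore a piecewise geometric
majorant of `Δ`.
-/

/-- A positive real sequence `(y k)_{k ≥ 1}` is a piecewise geometric sequence (PGS)
with rate `β ∈ (0,1)` and (strictly increasing) chunk indices `n 1 < n 2 < ⋯` if each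
chunk `y (n j + 1), …, y (n (j+1))` is geometric with rate `β`, and the peaks
`y (n j + 1)` themselves form a geometric sequence with rate `β`. -/
def IsPGSWith (y : ℕ → ℝ) (β : ℝ) (n : ℕ → ℕ) : Prop :=
  (∀ k, 1 ≤ k → 0 < y k) ∧ 0 < β ∧ β < 1 ∧
  (∀ j, 1 ≤ j → n j < n (j + 1)) ∧
  (∀ j, 1 ≤ j → ∀ k, n j + 1 ≤ k → k ≤ n (j + 1) →
    y k = y (n j + 1) * β ^ (k - n j - 1)) ∧
  (∀ j, 1 ≤ j → y (n j + 1) = y (n 1 + 1) * β ^ (j - 1))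

open Nat

theorem Real.sqrt_pow_eq_pow_sqrt {x : ℝ} (hx : 0 ≤ x) (n : ℕ) : √(x ^ n) = √x ^ n := by
  rw [← Real.sqrt_sq (by positivity : 0 ≤ √x ^ n), ← pow_mul, mul_comm, pow_mul,
    Real.sq_sqrt hx]

theorem le_mul_pow_sub_of_le_mul {f : ℕ → ℝ} {β : ℝ} (hβ : 0 ≤ β) {a b : ℕ}
    (h : ∀ i, a ≤ i → i < b → f (i + 1) ≤ β * f i) {k : ℕ} (hak : a ≤ k) (hkb : k ≤ b) :
    f k ≤ f a * β ^ (k - a) := by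
  induction k, hak using Nat.le_induction with
  | base => simp
  | succ k hak ih =>
    calc f (k + 1) ≤ β * f k := h k hak hkb
      _ ≤ β * (f a * β ^ (k - a)) := by gcongr; exact ih (by omega)
      _ = f a * β ^ (k + 1 - a) := by rw [Nat.sub_add_comm hak, pow_succ]; ring

namespace Nat

variable {p : ℕ → Prop}

theorem not_of_nth_lt_of_lt_nth_succ {i j : ℕ} (h₁ : nth p j < i) (h₂ : i < nth p (j + 1)) :
    ¬p i :=
  fun hi => (le_nth_of_lt_nth_succ h₂ hi).not_gt h₁

theorem count_eq_succ_iff [DecidablePred p] (hp : (Set.ofPred p).Infinite) {j k : ℕ} :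
    count p k = j + 1 ↔ nth p j < k ∧ k ≤ nth p (j + 1) := by
  rw [← lt_nth_iff_count_lt hp, ← count_le_iff_le_nth hp]
  omega

end Nat

section Sawtooth

variable {p : ℕ → Prop} [DecidablePred p] {C β : ℝ} {x : ℕ → ℝ}

/-- Equal to `x k` for `k ≤ nth p 0`, and to `C * β ^ j * β ^ (k - nth p j - 1)` on the chunk
`nth p j < k ≤ nth p (j + 1)`, whose index `j + 1` is `count p k`. -/
noncomputable def sawtooth (p : ℕ → Prop) [DecidablePred p] (C β : ℝ) (x : ℕ → ℝ) (k : ℕ) :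
    ℝ :=
  if count p k = 0 then x k
  else C * β ^ (count p k - 1) * β ^ (k - nth p (count p k - 1) - 1)

theorem sawtooth_of_count_eq_zero {k : ℕ} (hk : count p k = 0) : sawtooth p C β x k = x k :=
  if_pos hk

theorem sawtooth_of_count_eq_succ {j k : ℕ} (hk : count p k = j + 1) :
    sawtooth p C β x k = C * β ^ j * β ^ (k - nth p j - 1) := by
  simp [sawtooth, hk]

theorem sawtooth_nth_succ (hp : (Set.ofPred p).Infinite) (j : ℕ) :
    sawtooth p C β x (nth p j + 1) = C * β ^ j := by
  rw [sawtooth_of_count_eq_succ (count_nth_succ_of_infinite hp j)]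
  simp

theorem isPGSWith_sawtooth (hp : (Set.ofPred p).Infinite) (hC : 0 < C) (hβ₀ : 0 < β)
    (hβ₁ : β < 1) (hx : ∀ k, 1 ≤ k → 0 < x k) :
    IsPGSWith (sawtooth p C β x) β (fun j => nth p (j - 1)) := by
  refine ⟨fun k hk => ?_, hβ₀, hβ₁, fun j hj => ?_, fun j hj k hk₁ hk₂ => ?_, fun j hj => ?_⟩
  · unfold sawtooth
    split_ifs
    exacts [hx k hk, by positivity]
  · exact nth_strictMono hp (by omega)
  · obtain ⟨i, rfl⟩ : ∃ i, j = i + 1 := ⟨j - 1, by omega⟩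
    have hk : count p k = i + 1 := (count_eq_succ_iff hp).2 ⟨hk₁, by simpa using hk₂⟩
    simp only [add_tsub_cancel_right]
    rw [sawtooth_of_count_eq_succ hk, sawtooth_nth_succ hp]
  · obtain ⟨i, rfl⟩ : ∃ i, j = i + 1 := ⟨j - 1, by omega⟩
    simp [sawtooth_nth_succ hp]

theorem le_sawtooth (hp : (Set.ofPred p).Infinite) (hβ : 0 ≤ β)
    (hpeak : ∀ j, x (nth p j + 1) ≤ C * β ^ j)
    (hchunk : ∀ j k, nth p j < k → k ≤ nth p (j + 1) →
      x k ≤ x (nth p j + 1) * β ^ (k - nth p j - 1))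
    (k : ℕ) : x k ≤ sawtooth p C β x k := by
  obtain hk | ⟨j, hk⟩ : count p k = 0 ∨ ∃ j, count p k = j + 1 :=
    (count p k).eq_zero_or_eq_succ_pred.imp id fun h => ⟨_, h⟩
  · rw [sawtooth_of_count_eq_zero hk]
  · obtain ⟨hk₁, hk₂⟩ := (count_eq_succ_iff hp).1 hk
    rw [sawtooth_of_count_eq_succ hk]
    exact (hchunk j k hk₁ hk₂).trans (by gcongr; exact hpeak j)

end Sawtooth

section Residuals

variable {Δ ρ : ℕ → ℝ} {γ η c : ℝ}

/-- Condition `C1` at an iteration `k ≥ 1`. -/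
def InsufficientDecrease (Δ : ℕ → ℝ) (η : ℝ) (k : ℕ) : Prop :=
  1 ≤ k ∧ η * Δ k ≤ Δ (k + 1)

theorem rho_eq_mul_pow_count [DecidablePred (InsufficientDecrease Δ η)]
    (hrule1 : ∀ k, 1 ≤ k → η * Δ k ≤ Δ (k + 1) → ρ (k + 1) = γ * ρ k)
    (hrule2 : ∀ k, 1 ≤ k → Δ (k + 1) < η * Δ k → ρ (k + 1) = ρ k) {k : ℕ} (hk : 1 ≤ k) :
    ρ k = ρ 1 * γ ^ count (InsufficientDecrease Δ η) k := by
  induction k, hk using Nat.le_induction with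
  | base => simp [count_succ, InsufficientDecrease]
  | succ k hk ih =>
    rw [count_succ]
    by_cases h : η * Δ k ≤ Δ (k + 1)
    · rw [hrule1 k hk h, ih, if_pos ⟨hk, h⟩, pow_succ]
      ring
    · rw [hrule2 k hk (not_le.mp h), ih, if_neg fun h' => h h'.2, add_zero]

theorem residual_nth_succ_le (hγ : 0 ≤ γ)
    (hrule1 : ∀ k, 1 ≤ k → η * Δ k ≤ Δ (k + 1) → ρ (k + 1) = γ * ρ k)
    (hrule2 : ∀ k, 1 ≤ k → Δ (k + 1) < η * Δ k → ρ (k + 1) = ρ k)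
    (hlem : ∀ k, 1 ≤ k → η * Δ k ≤ Δ (k + 1) → Δ (k + 1) ≤ c / √(ρ k))
    (hinf : (Set.ofPred (InsufficientDecrease Δ η)).Infinite) (j : ℕ) :
    Δ (nth (InsufficientDecrease Δ η) j + 1) ≤ c / √(ρ 1) * (1 / √γ) ^ j := by
  classical
  obtain ⟨hj₁, hj₂⟩ := nth_mem_of_infinite hinf j
  calc Δ (nth (InsufficientDecrease Δ η) j + 1)
      ≤ c / √(ρ (nth (InsufficientDecrease Δ η) j)) := hlem _ hj₁ hj₂
    _ = c / √(ρ 1) * (1 / √γ) ^ j := by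
      rw [rho_eq_mul_pow_count hrule1 hrule2 hj₁, count_nth_of_infinite hinf,
        Real.sqrt_mul' _ (pow_nonneg hγ j), Real.sqrt_pow_eq_pow_sqrt hγ]
      ring

theorem residual_le_mul_pow_of_nth_lt (hΔpos : ∀ k, 1 ≤ k → 0 < Δ k)
    (hinf : (Set.ofPred (InsufficientDecrease Δ η)).Infinite) {β : ℝ} (hβ : 0 ≤ β)
    (hηβ : η ≤ β) {j k : ℕ} (hk₁ : nth (InsufficientDecrease Δ η) j < k)
    (hk₂ : k ≤ nth (InsufficientDecrease Δ η) (j + 1)) :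
    Δ k ≤ Δ (nth (InsufficientDecrease Δ η) j + 1) *
      β ^ (k - nth (InsufficientDecrease Δ η) j - 1) := by
  have hN : 1 ≤ nth (InsufficientDecrease Δ η) j := (nth_mem_of_infinite hinf j).1
  rw [Nat.sub_sub]
  refine le_mul_pow_sub_of_le_mul hβ (fun i hi₁ hi₂ => ?_) hk₁ hk₂
  have hC2 : ¬InsufficientDecrease Δ η i := not_of_nth_lt_of_lt_nth_succ hi₁ hi₂
  have hi : 1 ≤ i := by omega
  calc Δ (i + 1) ≤ η * Δ i := (not_le.mp fun h => hC2 ⟨hi, h⟩).le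
    _ ≤ β * Δ i := by gcongr; exact (hΔpos i hi).le

end Residuals

theorem residual_PGS_upper_bound_case_S3_general
    (Δ ρ : ℕ → ℝ) (γ η c : ℝ)
    (hΔpos : ∀ k, 1 ≤ k → 0 < Δ k)
    (hγ : 1 < γ) (hη0 : 0 < η) (hη1 : η < 1)
    (hrule1 : ∀ k, 1 ≤ k → η * Δ k ≤ Δ (k + 1) → ρ (k + 1) = γ * ρ k)
    (hrule2 : ∀ k, 1 ≤ k → Δ (k + 1) < η * Δ k → ρ (k + 1) = ρ k)
    (hlem : ∀ k, 1 ≤ k → η * Δ k ≤ Δ (k + 1) → Δ (k + 1) ≤ c / Real.sqrt (ρ k))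
    (hinf1 : {k : ℕ | 1 ≤ k ∧ η * Δ k ≤ Δ (k + 1)}.Infinite) :
    ∃ y : ℕ → ℝ, ∃ n : ℕ → ℕ,
      IsPGSWith y (max (1 / Real.sqrt γ) η) n ∧ ∀ k, 1 ≤ k → Δ k ≤ y k := by
  classical
  set β := max (1 / √γ) η
  set C := c / √(ρ 1)
  have hβ₀ : 0 < β := hη0.trans_le (le_max_right _ _)
  have hβ₁ : β < 1 :=
    max_lt ((div_lt_one (by positivity)).2 (Real.lt_sqrt_of_sq_lt (by simpa))) hη1
  have hpeak₀ := residual_nth_succ_le (by positivity) hrule1 hrule2 hlem hinf1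
  have hC : 0 < C := (hΔpos _ le_add_self).trans_le (by simpa using hpeak₀ 0)
  have hpeak (j : ℕ) : Δ (nth (InsufficientDecrease Δ η) j + 1) ≤ C * β ^ j :=
    (hpeak₀ j).trans (by gcongr; exact le_max_left _ _)
  exact ⟨_, _, isPGSWith_sawtooth hinf1 hC hβ₀ hβ₁ hΔpos, fun k _ =>
    le_sawtooth hinf1 hβ₀.le hpeak
      (fun j k => residual_le_mul_pow_of_nth_lt hΔpos hinf1 hβ₀.le (le_max_right _ _)) k⟩

/-- **Lemma 2 of the paper.** If both conditions `C1` and `C2` hold at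
infinitely many iterations (case `S3`), then the residuals `(Δ k)` are bounded by a
piecewise geometric sequence with rate `β = max (1/√γ) η`. -/
theorem residual_PGS_upper_bound_case_S3
    (Δ ρ : ℕ → ℝ) (γ η c : ℝ)
    (hΔpos : ∀ k, 1 ≤ k → 0 < Δ k) (hρpos : ∀ k, 1 ≤ k → 0 < ρ k)
    (hγ : 1 < γ) (hη0 : 0 < η) (hη1 : η < 1) (hc : 0 < c)
    (hrule1 : ∀ k, 1 ≤ k → η * Δ k ≤ Δ (k + 1) → ρ (k + 1) = γ * ρ k)
    (hrule2 : ∀ k, 1 ≤ k → Δ (k + 1) < η * Δ k → ρ (k + 1) = ρ k)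
    (hlem : ∀ k, 1 ≤ k → η * Δ k ≤ Δ (k + 1) → Δ (k + 1) ≤ c / Real.sqrt (ρ k))
    (hinf1 : {k : ℕ | 1 ≤ k ∧ η * Δ k ≤ Δ (k + 1)}.Infinite)
    (hinf2 : {k : ℕ | 1 ≤ k ∧ Δ (k + 1) < η * Δ k}.Infinite) :
    ∃ y : ℕ → ℝ, ∃ n : ℕ → ℕ,
      IsPGSWith y (max (1 / Real.sqrt γ) η) n ∧ ∀ k, 1 ≤ k → Δ k ≤ y k :=
  residual_PGS_upper_bound_case_S3_general Δ ρ γ η c hΔpos hγ hη0 hη1 hrule1 hrule2 hlem hinf1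
end

section
/- Suppose that both condition C1 and condition C2 hold at infinitely many iterations. Then the series ∑_{k=1}^∞ Δ_k converges. -/
/-!
With `C = c √γ / (√γ - 1)`, the potential `φ k = η Δ k + C / √(ρ k)` satisfies
`(1 - η) Δ (k + 1) + φ (k + 1) ≤ φ k`, i.e. `Δ (k + 1) + C / √(ρ (k + 1)) ≤ η Δ k + C / √(ρ k)`:
at a `C2` step because `Δ (k + 1) < η Δ k` and `ρ` is unchanged, at a `C1` step because `√ρ`
grows by the factor `√γ`, which releases `C (1 - 1/√γ) / √(ρ k) = c / √(ρ k) ≥ Δ (k + 1)`.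
Telescoping bounds `(1 - η) ∑ Δ` by `φ 1`, so the series of positive terms converges.
-/

open Finset Real

theorem sum_range_add_le_of_add_le {u φ : ℕ → ℝ} (h : ∀ k, u k + φ (k + 1) ≤ φ k) (n : ℕ) :
    ∑ k ∈ range n, u k + φ n ≤ φ 0 := by
  induction n with
  | zero => simp
  | succ n ih => rw [sum_range_succ]; linarith [h n]

theorem summable_of_add_le {u φ : ℕ → ℝ} (hu : ∀ k, 0 ≤ u k) (hφ : ∀ k, 0 ≤ φ k)
    (h : ∀ k, u k + φ (k + 1) ≤ φ k) : Summable u :=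
  summable_of_sum_range_le hu fun n => by linarith [sum_range_add_le_of_add_le h n, hφ n]

theorem div_sqrt_sub_div_sqrt_mul {γ : ℝ} (hγ : 1 < γ) (c : ℝ) {r : ℝ} (hr : 0 < r) :
    c * √γ / (√γ - 1) / √r - c * √γ / (√γ - 1) / √(γ * r) = c / √r := by
  have hsγ : 1 < √γ := by rwa [lt_sqrt zero_le_one, one_pow]
  have hsr : 0 < √r := sqrt_pos.mpr hr
  rw [sqrt_mul (by linarith)]
  field_simp [(sub_pos.mpr hsγ).ne']

theorem add_div_sqrt_le_mul_add_div_sqrt {γ η c a b r r' : ℝ} (hγ : 1 < γ) (hη : 0 ≤ η)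
    (ha : 0 ≤ a) (hr : 0 < r)
    (h1 : η * a ≤ b → r' = γ * r ∧ b ≤ c / √r) (h2 : b < η * a → r' = r) :
    b + c * √γ / (√γ - 1) / √r' ≤ η * a + c * √γ / (√γ - 1) / √r := by
  rcases le_or_gt (η * a) b with hC1 | hC2
  · obtain ⟨rfl, hb⟩ := h1 hC1
    have := div_sqrt_sub_div_sqrt_mul hγ c hr
    nlinarith [mul_nonneg hη ha]
  · rw [h2 hC2]
    linarith

theorem residual_series_converges_case_S3_general
    (Δ ρ : ℕ → ℝ) (γ η c : ℝ)
    (hΔpos : ∀ k, 1 ≤ k → 0 < Δ k) (hρpos : ∀ k, 1 ≤ k → 0 < ρ k)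
    (hγ : 1 < γ) (hη0 : 0 < η) (hη1 : η < 1) (hc : 0 < c)
    (hrule1 : ∀ k, 1 ≤ k → η * Δ k ≤ Δ (k + 1) → ρ (k + 1) = γ * ρ k)
    (hrule2 : ∀ k, 1 ≤ k → Δ (k + 1) < η * Δ k → ρ (k + 1) = ρ k)
    (hlem : ∀ k, 1 ≤ k → η * Δ k ≤ Δ (k + 1) → Δ (k + 1) ≤ c / Real.sqrt (ρ k)) :
    ∃ S : ℝ, Filter.Tendsto (fun N => ∑ k ∈ Finset.Icc 1 N, Δ k)
      Filter.atTop (nhds S) := by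
  set C := c * √γ / (√γ - 1)
  have hC : 0 ≤ C := div_nonneg (by positivity) (sub_nonneg.mpr (one_le_sqrt.mpr hγ.le))
  have hstep (i : ℕ) : Δ (i + 1 + 1) + C / √(ρ (i + 1 + 1)) ≤ η * Δ (i + 1) + C / √(ρ (i + 1)) :=
    add_div_sqrt_le_mul_add_div_sqrt hγ hη0.le (hΔpos _ le_add_self).le (hρpos _ le_add_self)
      (fun h => ⟨hrule1 _ le_add_self h, hlem _ le_add_self h⟩) (hrule2 _ le_add_self)
  have hsum : Summable fun i => (1 - η) * Δ (i + 1 + 1) :=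
    summable_of_add_le (φ := fun i => η * Δ (i + 1) + C / √(ρ (i + 1)))
      (fun i => mul_nonneg (by linarith) (hΔpos _ le_add_self).le)
      (fun i => by have := hΔpos (i + 1) le_add_self; positivity)
      (fun i => by linarith [hstep i])
  have hsum' : Summable fun i => Δ (i + 1) :=
    (summable_nat_add_iff 1).mp ((summable_mul_left_iff (by linarith)).mp hsum)
  refine ⟨_, hsum'.hasSum.tendsto_sum_nat.congr fun N => ?_⟩
  rw [range_eq_Ico, sum_Ico_add', zero_add, Ico_add_one_right_eq_Icc]

/-- If both conditions `C1` and `C2` hold at infinitely many iterations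
(case `S3`), then the series `∑_{k=1}^∞ Δ k` converges. -/
theorem residual_series_converges_case_S3
    (Δ ρ : ℕ → ℝ) (γ η c : ℝ)
    (hΔpos : ∀ k, 1 ≤ k → 0 < Δ k) (hρpos : ∀ k, 1 ≤ k → 0 < ρ k)
    (hγ : 1 < γ) (hη0 : 0 < η) (hη1 : η < 1) (hc : 0 < c)
    (hrule1 : ∀ k, 1 ≤ k → η * Δ k ≤ Δ (k + 1) → ρ (k + 1) = γ * ρ k)
    (hrule2 : ∀ k, 1 ≤ k → Δ (k + 1) < η * Δ k → ρ (k + 1) = ρ k)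
    (hlem : ∀ k, 1 ≤ k → η * Δ k ≤ Δ (k + 1) → Δ (k + 1) ≤ c / Real.sqrt (ρ k))
    (hinf1 : {k : ℕ | 1 ≤ k ∧ η * Δ k ≤ Δ (k + 1)}.Infinite)
    (hinf2 : {k : ℕ | 1 ≤ k ∧ Δ (k + 1) < η * Δ k}.Infinite) :
    ∃ S : ℝ, Filter.Tendsto (fun N => ∑ k ∈ Finset.Icc 1 N, Δ k)
      Filter.atTop (nhds S) :=
  residual_series_converges_case_S3_general Δ ρ γ η c hΔpos hρpos hγ hη0 hη1 hc hrule1 hrule2 hlem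
end

section
/- Let (θ_k)_{k≥1} be a sequence in a complete metric space whose consecutive distances are given by the residuals, i.e., dist(θ_k, θ_{k+1}) = Δ_{k+1} for all k ≥ 1. Suppose that both condition C1 and condition C2 hold at infinitely many iterations. Then (θ_k) is a Cauchy sequence and hence converges to a limit point θ* in the space. -/
/-! Along the iteration, either the residual contracts by `η` while the bound `c / √ρ` stays put
(condition C2), or the residual is dominated by the bound, which then contracts by `1 / √γ`
(condition C1). In both cases the potential `η/(1-η) Δ + c/√ρ / ((1-η)(1-1/√γ))` drops by at
least the next residual, so the residuals, i.e. the consecutive distances, are summable. -/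

theorem summable_of_le_sub_succ {d V : ℕ → ℝ} (hd : ∀ n, 0 ≤ d n) (hV : ∀ n, 0 ≤ V n)
    (h : ∀ n, d n ≤ V n - V (n + 1)) : Summable d := by
  refine summable_of_sum_range_le hd (c := V 0) fun n => ?_
  calc ∑ i ∈ Finset.range n, d i
      ≤ ∑ i ∈ Finset.range n, (V i - V (i + 1)) := Finset.sum_le_sum fun i _ => h i
    _ = V 0 - V n := Finset.sum_range_sub' V n
    _ ≤ V 0 := sub_le_self _ (hV n)

theorem summable_of_contract_or_le_contracting {d b : ℕ → ℝ} {η q : ℝ}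
    (hη0 : 0 ≤ η) (hη1 : η < 1) (hq1 : q < 1) (hd : ∀ n, 0 ≤ d n) (hb : ∀ n, 0 ≤ b n)
    (hstep : ∀ n, (d (n + 1) ≤ η * d n ∧ b (n + 1) = b n) ∨
      (d (n + 1) ≤ b n ∧ b (n + 1) = q * b n)) :
    Summable d := by
  have hη' : 0 < 1 - η := by linarith
  have hq' : 0 < 1 - q := by linarith
  set V : ℕ → ℝ := fun n => η / (1 - η) * d n + b n / ((1 - η) * (1 - q))
  have hV : ∀ n, 0 ≤ V n := fun n => by have := hd n; have := hb n; positivity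
  refine (summable_nat_add_iff 1).mp <| summable_of_le_sub_succ (fun n => hd _) hV fun n => ?_
  have hdn := hd n
  simp only [V]
  rcases hstep n with ⟨hdec, hbeq⟩ | ⟨hdom, hbeq⟩
  · rw [hbeq, le_sub_iff_add_le, ← sub_nonneg]
    have : 0 ≤ (η * d n - d (n + 1)) / (1 - η) := div_nonneg (by linarith) hη'.le
    convert this using 1
    field_simp
    ring
  · rw [hbeq, le_sub_iff_add_le, ← sub_nonneg]
    have : 0 ≤ (b n - d (n + 1)) / (1 - η) + η / (1 - η) * d n :=
      add_nonneg (div_nonneg (by linarith) hη'.le) (by positivity)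
    convert this using 1
    field_simp
    ring

theorem iterates_converge_case_S3_general
    {X : Type*} [MetricSpace X] [CompleteSpace X]
    (Δ ρ : ℕ → ℝ) (γ η c : ℝ) (θ : ℕ → X)
    (hγ : 1 < γ) (hη0 : 0 < η) (hη1 : η < 1) (hc : 0 < c)
    (hrule1 : ∀ k, 1 ≤ k → η * Δ k ≤ Δ (k + 1) → ρ (k + 1) = γ * ρ k)
    (hrule2 : ∀ k, 1 ≤ k → Δ (k + 1) < η * Δ k → ρ (k + 1) = ρ k)
    (hlem : ∀ k, 1 ≤ k → η * Δ k ≤ Δ (k + 1) → Δ (k + 1) ≤ c / Real.sqrt (ρ k))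
    (hθ : ∀ k, 1 ≤ k → dist (θ k) (θ (k + 1)) = Δ (k + 1)) :
    CauchySeq θ ∧ ∃ θstar : X, Filter.Tendsto θ Filter.atTop (nhds θstar) := by
  have hdist : ∀ n, dist (θ (n + 1)) (θ (n + 2)) = Δ (n + 2) := fun n => hθ (n + 1) (by omega)
  have hbound_mul : ∀ r, c / √(γ * r) = (√γ)⁻¹ * (c / √r) := fun r => by
    rw [Real.sqrt_mul (by linarith), div_mul_eq_div_div, div_eq_inv_mul _ √γ, mul_div_assoc]
  have hsummable : Summable fun n => Δ (n + 2) := by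
    refine summable_of_contract_or_le_contracting (b := fun n => c / √(ρ (n + 2)))
      hη0.le hη1 (inv_lt_one_of_one_lt₀ ((Real.lt_sqrt zero_le_one).mpr (by simpa using hγ)))
      (fun n => hdist n ▸ dist_nonneg) (fun n => by positivity) fun n => ?_
    rcases le_or_gt (η * Δ (n + 2)) (Δ (n + 2 + 1)) with hC1 | hC2
    · exact Or.inr ⟨hlem _ (by omega) hC1, by rw [hrule1 _ (by omega) hC1, hbound_mul]⟩
    · exact Or.inl ⟨hC2.le, by rw [hrule2 _ (by omega) hC2]⟩
  have hcauchy : CauchySeq θ := cauchySeq_of_summable_dist <|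
    (summable_nat_add_iff 1).mp (by simpa only [hdist] using hsummable)
  exact ⟨hcauchy, cauchySeq_tendsto_of_complete hcauchy⟩

/-- **Proposition 1 of the paper.** Let `(θ k)` be a sequence in a complete
metric space with `dist (θ k) (θ (k+1)) = Δ (k+1)` for all `k ≥ 1`. If both conditions
`C1` and `C2` hold at infinitely many iterations (case `S3`), then `(θ k)` is Cauchy and
hence converges to some limit `θ*`. -/
theorem iterates_converge_case_S3
    {X : Type*} [MetricSpace X] [CompleteSpace X]
    (Δ ρ : ℕ → ℝ) (γ η c : ℝ) (θ : ℕ → X)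
    (hΔpos : ∀ k, 1 ≤ k → 0 < Δ k) (hρpos : ∀ k, 1 ≤ k → 0 < ρ k)
    (hγ : 1 < γ) (hη0 : 0 < η) (hη1 : η < 1) (hc : 0 < c)
    (hrule1 : ∀ k, 1 ≤ k → η * Δ k ≤ Δ (k + 1) → ρ (k + 1) = γ * ρ k)
    (hrule2 : ∀ k, 1 ≤ k → Δ (k + 1) < η * Δ k → ρ (k + 1) = ρ k)
    (hlem : ∀ k, 1 ≤ k → η * Δ k ≤ Δ (k + 1) → Δ (k + 1) ≤ c / Real.sqrt (ρ k))
    (hθ : ∀ k, 1 ≤ k → dist (θ k) (θ (k + 1)) = Δ (k + 1))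
    (hinf1 : {k : ℕ | 1 ≤ k ∧ η * Δ k ≤ Δ (k + 1)}.Infinite)
    (hinf2 : {k : ℕ | 1 ≤ k ∧ Δ (k + 1) < η * Δ k}.Infinite) :
    CauchySeq θ ∧ ∃ θstar : X, Filter.Tendsto θ Filter.atTop (nhds θstar) :=
  iterates_converge_case_S3_general Δ ρ γ η c θ hγ hη0 hη1 hc hrule1 hrule2 hlem hθ
end

section
/- There exists a constant c > 0, independent of the iteration index, such that for every iteration k at which condition C1 holds (i.e., Δ_{k+1} ≥ η·Δ_k), one has Δ_{k+1} ≤ c/√(ρ_k). -/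
/-- **Lemma 1 of Chan et al..** For the PnP-ADMM iterates, under the
bounded-gradient assumption on `f` and the bounded-perturbation assumption on the
denoiser family `Dden`, there exists a constant `c > 0` such that whenever condition
`C1` (`Δ (k+1) ≥ η * Δ k`) holds at an iteration `k ≥ 1`, one has
`Δ (k+1) ≤ c / √(ρ k)`. -/
theorem pnp_admm_residual_bound
    (d : ℕ) (hd : 1 ≤ d)
    (f : EuclideanSpace ℝ (Fin d) → ℝ) (hf : Differentiable ℝ f)
    (M : ℝ) (hM : 0 < M)
    (hgrad : ∀ z, ‖gradient f z‖ ≤ M * Real.sqrt d)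
    (Dden : ℝ → EuclideanSpace ℝ (Fin d) → EuclideanSpace ℝ (Fin d))
    (K : ℝ) (hK : 0 < K)
    (hden : ∀ σ : ℝ, 0 < σ → ∀ z, ‖Dden σ z - z‖ ^ 2 ≤ K * d * σ ^ 2)
    (lam γ η : ℝ) (hlam : 0 < lam) (hγ : 1 < γ) (hη0 : 0 < η) (hη1 : η < 1)
    (x v u : ℕ → EuclideanSpace ℝ (Fin d)) (ρ : ℕ → ℝ) (Δ : ℕ → ℝ)
    (hρpos : ∀ k, 0 < ρ k)
    (hx : ∀ k, ∀ z, f (x (k + 1)) + ρ k / 2 * ‖x (k + 1) - v k + u k‖ ^ 2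
                  ≤ f z + ρ k / 2 * ‖z - v k + u k‖ ^ 2)
    (hv : ∀ k, v (k + 1) = Dden (Real.sqrt (lam / ρ k)) (x (k + 1) + u k))
    (hu : ∀ k, u (k + 1) = u k + x (k + 1) - v (k + 1))
    (hΔ : ∀ k, Δ (k + 1) = (Real.sqrt d)⁻¹ *
      (‖x k - x (k + 1)‖ + ‖v k - v (k + 1)‖ + ‖u k - u (k + 1)‖))
    (hrule1 : ∀ k, 1 ≤ k → η * Δ k ≤ Δ (k + 1) → ρ (k + 1) = γ * ρ k)
    (hrule2 : ∀ k, 1 ≤ k → Δ (k + 1) < η * Δ k → ρ (k + 1) = ρ k) :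
    ∃ c > 0, ∀ k, 1 ≤ k → η * Δ k ≤ Δ (k + 1) → Δ (k + 1) ≤ c / Real.sqrt (ρ k) := by
  have hd0 : (0:ℝ) < d := by exact_mod_cast Nat.lt_of_lt_of_le Nat.zero_lt_one hd
  have hd1 : (1:ℝ) ≤ Real.sqrt d := by
    rw [show (1:ℝ) = Real.sqrt 1 by simp]
    exact Real.sqrt_le_sqrt (by exact_mod_cast hd)
  set L : ℝ := M * Real.sqrt d with hLdef
  have hL : 0 < L := mul_pos hM (lt_of_lt_of_le one_pos hd1)
  -- Lipschitz bound for f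
  have hlip : ∀ a b, f a - f b ≤ L * ‖a - b‖ := by
    intro a b
    have hfd : ∀ z ∈ (Set.univ : Set (EuclideanSpace ℝ (Fin d))), DifferentiableAt ℝ f z :=
      fun z _ => hf z
    have hbd : ∀ z ∈ (Set.univ : Set (EuclideanSpace ℝ (Fin d))), ‖fderiv ℝ f z‖ ≤ L := by
      intro z _
      have he : ‖fderiv ℝ f z‖ = ‖gradient f z‖ := by
        rw [gradient]
        exact ((InnerProductSpace.toDual ℝ _).symm.norm_map _).symm
      rw [he]; exact hgrad z
    have h := Convex.norm_image_sub_le_of_norm_fderiv_le hfd hbd convex_univ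
      (Set.mem_univ b) (Set.mem_univ a)
    calc f a - f b ≤ |f a - f b| := le_abs_self _
      _ = ‖f a - f b‖ := (Real.norm_eq_abs _).symm
      _ ≤ L * ‖a - b‖ := h
  -- bound on the proximal residual
  have hw : ∀ k, ‖x (k+1) - v k + u k‖ ≤ 2 * (L * (ρ k)⁻¹) := by
    intro k
    have h1 := hx k (v k - u k)
    have h0 : v k - u k - v k + u k = (0 : EuclideanSpace ℝ (Fin d)) := by abel
    rw [h0, norm_zero] at h1
    have h2 : f (v k - u k) - f (x (k+1)) ≤ L * ‖x (k+1) - v k + u k‖ := by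
      have h3 := hlip (v k - u k) (x (k+1))
      have e : ‖v k - u k - x (k+1)‖ = ‖x (k+1) - v k + u k‖ := by
        rw [show v k - u k - x (k+1) = -(x (k+1) - v k + u k) by abel, norm_neg]
      rwa [e] at h3
    rcases eq_or_lt_of_le (norm_nonneg (x (k+1) - v k + u k)) with h|h
    · rw [← h]
      have : (0:ℝ) < L * (ρ k)⁻¹ := mul_pos hL (inv_pos.mpr (hρpos k))
      linarith
    · have hgoal : ‖x (k+1) - v k + u k‖ * ρ k ≤ 2 * L := by
        nlinarith [h1, h2, h, hρpos k]
      have hρ := hρpos k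
      rw [show (2:ℝ) * (L * (ρ k)⁻¹) = (2 * L) / ρ k by field_simp]
      rw [le_div_iff₀ hρ]
      exact hgoal
  set A : ℝ := Real.sqrt (K * d * lam) with hAdef
  have hA : 0 < A := Real.sqrt_pos.mpr (mul_pos (mul_pos hK hd0) hlam)
  -- denoiser bound
  have hvd : ∀ k, ‖v (k+1) - (x (k+1) + u k)‖ ≤ A * (Real.sqrt (ρ k))⁻¹ := by
    intro k
    have hσp : 0 < lam / ρ k := div_pos hlam (hρpos k)
    have hσ : 0 < Real.sqrt (lam / ρ k) := Real.sqrt_pos.mpr hσp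
    have h1 := hden _ hσ (x (k+1) + u k)
    rw [← hv k, Real.sq_sqrt hσp.le] at h1
    have h2 : ‖v (k+1) - (x (k+1) + u k)‖
        = Real.sqrt (‖v (k+1) - (x (k+1) + u k)‖ ^ 2) :=
      (Real.sqrt_sq (norm_nonneg _)).symm
    rw [h2]
    refine (Real.sqrt_le_sqrt h1).trans (le_of_eq ?_)
    rw [show K * (d:ℝ) * (lam / ρ k) = (K * d * lam) / ρ k by ring,
      Real.sqrt_div (mul_pos (mul_pos hK hd0) hlam).le (ρ k), div_eq_mul_inv]
  have hvdiff : ∀ k, ‖v k - v (k+1)‖ ≤ A * (Real.sqrt (ρ k))⁻¹ + 2 * (L * (ρ k)⁻¹) := by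
    intro k
    have e : v k - v (k+1)
        = -(v (k+1) - (x (k+1) + u k)) - (x (k+1) - v k + u k) := by abel
    rw [e]
    refine (norm_sub_le _ _).trans ?_
    rw [norm_neg]
    exact add_le_add (hvd k) (hw k)
  have hub : ∀ k, ‖u (k+1)‖ ≤ A * (Real.sqrt (ρ k))⁻¹ + 4 * (L * (ρ k)⁻¹) := by
    intro k
    have e : u (k+1) = (x (k+1) - v k + u k) + (v k - v (k+1)) := by rw [hu k]; abel
    rw [e]
    refine (norm_add_le _ _).trans ?_
    have h1 := hw k; have h2 := hvdiff k; linarith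
  -- ρ monotonicity/growth
  have hstep : ∀ k, 1 ≤ k → ρ k ≤ ρ (k+1) ∧ ρ (k+1) ≤ γ * ρ k := by
    intro k hk
    rcases le_or_gt (η * Δ k) (Δ (k+1)) with h|h
    · rw [hrule1 k hk h]
      exact ⟨by nlinarith [hρpos k], le_refl _⟩
    · rw [hrule2 k hk h]
      exact ⟨le_refl _, by nlinarith [hρpos k]⟩
  set m : ℝ := min (ρ 0) (ρ 1) with hmdef
  have hm0 : 0 < m := lt_min (hρpos 0) (hρpos 1)
  have hmle : ∀ k, m ≤ ρ k := by
    intro k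
    induction k with
    | zero => exact min_le_left _ _
    | succ n ih =>
      cases n with
      | zero => exact min_le_right _ _
      | succ p => exact le_trans ih ((hstep (p+1) (by omega)).1)
  have hsm : 0 < Real.sqrt m := Real.sqrt_pos.mpr hm0
  have hinv : ∀ k, (ρ k)⁻¹ ≤ (Real.sqrt m)⁻¹ * (Real.sqrt (ρ k))⁻¹ := by
    intro k
    have e : (ρ k)⁻¹ = (Real.sqrt (ρ k))⁻¹ * (Real.sqrt (ρ k))⁻¹ := by
      rw [← mul_inv, Real.mul_self_sqrt (hρpos k).le]
    rw [e]
    refine mul_le_mul_of_nonneg_right ?_ (by positivity)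
    exact inv_anti₀ hsm (Real.sqrt_le_sqrt (hmle k))
  set P : ℝ := A + 4 * (L * (Real.sqrt m)⁻¹) with hPdef
  have hP : 0 < P :=
    add_pos hA (mul_pos (by norm_num) (mul_pos hL (inv_pos.mpr hsm)))
  -- uniform per-step bounds in terms of P * (√ρ)⁻¹
  have hLm : ∀ k, L * (ρ k)⁻¹ ≤ L * ((Real.sqrt m)⁻¹ * (Real.sqrt (ρ k))⁻¹) := by
    intro k
    exact mul_le_mul_of_nonneg_left (hinv k) hL.le
  have hw' : ∀ k, ‖x (k+1) - v k + u k‖ ≤ P * (Real.sqrt (ρ k))⁻¹ := by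
    intro k
    have h1 := hw k; have h2 := hLm k
    have h3 : (0:ℝ) ≤ A * (Real.sqrt (ρ k))⁻¹ :=
      mul_nonneg hA.le (by positivity)
    have h5 : (0:ℝ) ≤ L * (ρ k)⁻¹ := (mul_pos hL (inv_pos.mpr (hρpos k))).le
    have h6 : (0:ℝ) ≤ L * ((Real.sqrt m)⁻¹ * (Real.sqrt (ρ k))⁻¹) :=
      mul_nonneg hL.le (by positivity)
    rw [hPdef, add_mul]
    linarith
  have hvdiff' : ∀ k, ‖v k - v (k+1)‖ ≤ P * (Real.sqrt (ρ k))⁻¹ := by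
    intro k
    have h1 := hvdiff k; have h2 := hLm k
    have h5 : (0:ℝ) ≤ L * (ρ k)⁻¹ := (mul_pos hL (inv_pos.mpr (hρpos k))).le
    have h6 : (0:ℝ) ≤ L * ((Real.sqrt m)⁻¹ * (Real.sqrt (ρ k))⁻¹) :=
      mul_nonneg hL.le (by positivity)
    rw [hPdef, add_mul]
    linarith
  have hub' : ∀ k, ‖u (k+1)‖ ≤ P * (Real.sqrt (ρ k))⁻¹ := by
    intro k
    have h1 := hub k; have h2 := hLm k
    rw [hPdef, add_mul]
    linarith
  -- comparison of (√ρ)⁻¹ across steps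
  have hγ0 : (0:ℝ) < Real.sqrt γ := Real.sqrt_pos.mpr (by linarith)
  have hts : ∀ k, 1 ≤ k →
      (Real.sqrt (ρ k))⁻¹ ≤ Real.sqrt γ * (Real.sqrt (ρ (k+1)))⁻¹ := by
    intro k hk
    have h1 : Real.sqrt (ρ (k+1)) ≤ Real.sqrt γ * Real.sqrt (ρ k) := by
      rw [← Real.sqrt_mul (by linarith : (0:ℝ) ≤ γ)]
      exact Real.sqrt_le_sqrt (hstep k hk).2
    have h2 := inv_anti₀ (Real.sqrt_pos.mpr (hρpos (k+1))) h1
    have h3 : (Real.sqrt γ * Real.sqrt (ρ k))⁻¹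
        = (Real.sqrt γ)⁻¹ * (Real.sqrt (ρ k))⁻¹ := mul_inv _ _
    rw [h3] at h2
    calc (Real.sqrt (ρ k))⁻¹
        = Real.sqrt γ * ((Real.sqrt γ)⁻¹ * (Real.sqrt (ρ k))⁻¹) := by
          rw [← mul_assoc, mul_inv_cancel₀ hγ0.ne', one_mul]
      _ ≤ Real.sqrt γ * (Real.sqrt (ρ (k+1)))⁻¹ :=
          mul_le_mul_of_nonneg_left h2 hγ0.le
  -- main estimate for k = j+2, j ≥ 1
  set C : ℝ := P * (γ + 4 * Real.sqrt γ + 3) with hCdef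
  have hCpos : 0 < C := mul_pos hP (by nlinarith [hγ0])
  have main : ∀ j, 1 ≤ j → Δ (j+3) ≤ C * (Real.sqrt (ρ (j+2)))⁻¹ := by
    intro j hj
    have ex : x (j+2) - x (j+3)
        = ((x (j+2) - v (j+1) + u (j+1)) - (x (j+3) - v (j+2) + u (j+2)))
          + (v (j+1) - v (j+2)) + (u (j+2) - u (j+1)) := by abel
    have hxn : ‖x (j+2) - x (j+3)‖
        ≤ ‖x (j+2) - v (j+1) + u (j+1)‖ + ‖x (j+3) - v (j+2) + u (j+2)‖
          + ‖v (j+1) - v (j+2)‖ + ‖u (j+2)‖ + ‖u (j+1)‖ := by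
      rw [ex]
      have t1 := norm_add₃_le (E := EuclideanSpace ℝ (Fin d))
        (a := (x (j+2) - v (j+1) + u (j+1)) - (x (j+3) - v (j+2) + u (j+2)))
        (b := v (j+1) - v (j+2)) (c := u (j+2) - u (j+1))
      have t2 := norm_sub_le (x (j+2) - v (j+1) + u (j+1)) (x (j+3) - v (j+2) + u (j+2))
      have t3 := norm_sub_le (u (j+2)) (u (j+1))
      linarith
    have hun : ‖u (j+2) - u (j+3)‖ ≤ ‖u (j+2)‖ + ‖u (j+3)‖ := norm_sub_le _ _
    -- component bounds
    have b1 : ‖x (j+2) - v (j+1) + u (j+1)‖ ≤ P * (Real.sqrt (ρ (j+1)))⁻¹ := hw' (j+1)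
    have b2 : ‖x (j+3) - v (j+2) + u (j+2)‖ ≤ P * (Real.sqrt (ρ (j+2)))⁻¹ := hw' (j+2)
    have b3 : ‖v (j+1) - v (j+2)‖ ≤ P * (Real.sqrt (ρ (j+1)))⁻¹ := hvdiff' (j+1)
    have b4 : ‖v (j+2) - v (j+3)‖ ≤ P * (Real.sqrt (ρ (j+2)))⁻¹ := hvdiff' (j+2)
    have b5 : ‖u (j+1)‖ ≤ P * (Real.sqrt (ρ j))⁻¹ := hub' j
    have b6 : ‖u (j+2)‖ ≤ P * (Real.sqrt (ρ (j+1)))⁻¹ := hub' (j+1)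
    have b7 : ‖u (j+3)‖ ≤ P * (Real.sqrt (ρ (j+2)))⁻¹ := hub' (j+2)
    -- Δ bound
    have hdinv : (Real.sqrt (d:ℝ))⁻¹ ≤ 1 := by
      rw [inv_le_one_iff₀]; right; exact hd1
    have hS : Δ (j+3) ≤ ‖x (j+2) - x (j+3)‖ + ‖v (j+2) - v (j+3)‖ + ‖u (j+2) - u (j+3)‖ := by
      rw [hΔ (j+2)]
      have hSn : (0:ℝ) ≤ ‖x (j+2) - x (j+3)‖ + ‖v (j+2) - v (j+3)‖ + ‖u (j+2) - u (j+3)‖ := by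
        positivity
      have h7 := mul_le_mul_of_nonneg_right hdinv hSn
      linarith only [h7]
    -- √ρ comparisons
    have c1 : (Real.sqrt (ρ (j+1)))⁻¹ ≤ Real.sqrt γ * (Real.sqrt (ρ (j+2)))⁻¹ :=
      hts (j+1) (by omega)
    have c2 : (Real.sqrt (ρ j))⁻¹ ≤ Real.sqrt γ * (Real.sqrt (ρ (j+1)))⁻¹ := hts j hj
    have c3 : (Real.sqrt (ρ j))⁻¹ ≤ γ * (Real.sqrt (ρ (j+2)))⁻¹ := by
      have := mul_le_mul_of_nonneg_left c1 hγ0.le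
      have e : Real.sqrt γ * (Real.sqrt γ * (Real.sqrt (ρ (j+2)))⁻¹)
          = γ * (Real.sqrt (ρ (j+2)))⁻¹ := by
        rw [← mul_assoc, Real.mul_self_sqrt (by linarith : (0:ℝ) ≤ γ)]
      linarith [c2.trans this, e.le, e.ge]
    have e1 : P * (Real.sqrt (ρ j))⁻¹ ≤ P * (γ * (Real.sqrt (ρ (j+2)))⁻¹) :=
      mul_le_mul_of_nonneg_left c3 hP.le
    have e2 : P * (Real.sqrt (ρ (j+1)))⁻¹ ≤ P * (Real.sqrt γ * (Real.sqrt (ρ (j+2)))⁻¹) :=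
      mul_le_mul_of_nonneg_left c1 hP.le
    have final : Δ (j+3) ≤ P * (Real.sqrt (ρ j))⁻¹ + 4 * (P * (Real.sqrt (ρ (j+1)))⁻¹)
        + 3 * (P * (Real.sqrt (ρ (j+2)))⁻¹) := by
      linarith only [hS, hxn, hun, b1, b2, b3, b4, b5, b6, b7]
    calc Δ (j+3) ≤ P * (γ * (Real.sqrt (ρ (j+2)))⁻¹)
          + 4 * (P * (Real.sqrt γ * (Real.sqrt (ρ (j+2)))⁻¹))
          + 3 * (P * (Real.sqrt (ρ (j+2)))⁻¹) := by linarith only [final, e1, e2]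
      _ = C * (Real.sqrt (ρ (j+2)))⁻¹ := by rw [hCdef]; ring
  -- nonnegativity of Δ at successors
  have hΔnn : ∀ k, 0 ≤ Δ (k+1) := by
    intro k; rw [hΔ k]; positivity
  refine ⟨max C (max (Δ 2 * Real.sqrt (ρ 1)) (Δ 3 * Real.sqrt (ρ 2))),
    lt_of_lt_of_le hCpos (le_max_left _ _), ?_⟩
  intro k hk _
  have hsρ : 0 < Real.sqrt (ρ k) := Real.sqrt_pos.mpr (hρpos k)
  rcases (show k = 1 ∨ k = 2 ∨ 3 ≤ k by omega) with h1 | h2 | h3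
  · subst h1
    rw [le_div_iff₀ hsρ]
    exact le_trans (le_max_left _ _) (le_max_right _ _)
  · subst h2
    rw [le_div_iff₀ hsρ]
    exact le_trans (le_max_right _ _) (le_max_right _ _)
  · obtain ⟨j, rfl⟩ : ∃ j, k = j + 2 := ⟨k - 2, by omega⟩
    have hj : 1 ≤ j := by omega
    have h := main j hj
    rw [div_eq_mul_inv]
    refine h.trans (mul_le_mul_of_nonneg_right (le_max_left _ _) ?_)
    positivity
end

section
/- Under Assumptions 1 and 2, for any initialization (x_0, v_0, u_0), the PnP-ADMM iterates θ_k = (x_k, v_k, u_k) converge to a fixed point: there exists θ* ∈ ℝ^d × ℝ^d × ℝ^d such that D(θ_k, θ*) → 0 as k → ∞. -/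
open Finset in
lemma summable_of_contract_aux (a r : ℕ → ℝ) (η : ℝ) (hη0 : 0 ≤ η) (hη1 : η < 1)
    (ha : ∀ n, 0 ≤ a n) (hr : ∀ n, 0 ≤ r n)
    (hrec : ∀ n, a (n + 1) ≤ η * a n + (r n - r (n + 1))) :
    Summable a := by
  have h1η : 0 < 1 - η := by linarith
  have key : ∀ N, ∑ i ∈ range N, a i ≤ (a 0 + r 0) / (1 - η) := by
    intro N
    cases N with
    | zero => simpa using div_nonneg (by linarith [ha 0, hr 0]) h1η.le
    | succ N =>
      have hsum : ∑ i ∈ range (N + 1), a i = (∑ i ∈ range N, a (i + 1)) + a 0 :=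
        Finset.sum_range_succ' a N
      have h2 : ∑ i ∈ range N, a (i + 1) ≤
          η * ∑ i ∈ range N, a i + (r 0 - r N) := by
        calc ∑ i ∈ range N, a (i + 1)
            ≤ ∑ i ∈ range N, (η * a i + (r i - r (i + 1))) :=
              Finset.sum_le_sum fun i _ => hrec i
          _ = η * ∑ i ∈ range N, a i + (r 0 - r N) := by
              rw [Finset.sum_add_distrib, Finset.mul_sum, Finset.sum_range_sub']
      have h3 : ∑ i ∈ range N, a i ≤ ∑ i ∈ range (N + 1), a i :=
        Finset.sum_le_sum_of_subset_of_nonneg (by simp) (fun i _ _ => ha i)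
      have h4 : (1 - η) * ∑ i ∈ range (N + 1), a i ≤ a 0 + r 0 := by
        have := hr N
        nlinarith [h2, h3, hsum]
      rw [le_div_iff₀ h1η]
      linarith [h4]
  exact summable_of_sum_range_le ha key

set_option maxHeartbeats 1000000 in
/-- **Theorem 1 of Chan et al..** Under the bounded-gradient assumption
on `f` and the bounded-perturbation assumption on the denoiser family `Dden`, for any
initialization, the PnP-ADMM iterates `θ k = (x k, v k, u k)` converge to a fixed point:
there exists `θ*` such that `D (θ k) θ* → 0`, where
`D (θ, θ') = (1/√d) * (‖x − x'‖ + ‖v − v'‖ + ‖u − u'‖)`. -/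
theorem pnp_admm_fixed_point_convergence
    (d : ℕ) (hd : 1 ≤ d)
    (f : EuclideanSpace ℝ (Fin d) → ℝ) (hf : Differentiable ℝ f)
    (M : ℝ) (hM : 0 < M)
    (hgrad : ∀ z, ‖gradient f z‖ ≤ M * Real.sqrt d)
    (Dden : ℝ → EuclideanSpace ℝ (Fin d) → EuclideanSpace ℝ (Fin d))
    (K : ℝ) (hK : 0 < K)
    (hden : ∀ σ : ℝ, 0 < σ → ∀ z, ‖Dden σ z - z‖ ^ 2 ≤ K * d * σ ^ 2)
    (lam γ η : ℝ) (hlam : 0 < lam) (hγ : 1 < γ) (hη0 : 0 < η) (hη1 : η < 1)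
    (x v u : ℕ → EuclideanSpace ℝ (Fin d)) (ρ : ℕ → ℝ) (Δ : ℕ → ℝ)
    (hρpos : ∀ k, 0 < ρ k)
    (hx : ∀ k, ∀ z, f (x (k + 1)) + ρ k / 2 * ‖x (k + 1) - v k + u k‖ ^ 2
                  ≤ f z + ρ k / 2 * ‖z - v k + u k‖ ^ 2)
    (hv : ∀ k, v (k + 1) = Dden (Real.sqrt (lam / ρ k)) (x (k + 1) + u k))
    (hu : ∀ k, u (k + 1) = u k + x (k + 1) - v (k + 1))
    (hΔ : ∀ k, Δ (k + 1) = (Real.sqrt d)⁻¹ *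
      (‖x k - x (k + 1)‖ + ‖v k - v (k + 1)‖ + ‖u k - u (k + 1)‖))
    (hrule1 : ∀ k, 1 ≤ k → η * Δ k ≤ Δ (k + 1) → ρ (k + 1) = γ * ρ k)
    (hrule2 : ∀ k, 1 ≤ k → Δ (k + 1) < η * Δ k → ρ (k + 1) = ρ k) :
    ∃ θstar : EuclideanSpace ℝ (Fin d) × EuclideanSpace ℝ (Fin d) ×
        EuclideanSpace ℝ (Fin d),
      Filter.Tendsto
        (fun k => (Real.sqrt d)⁻¹ *
          (‖x k - θstar.1‖ + ‖v k - θstar.2.1‖ + ‖u k - θstar.2.2‖))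
        Filter.atTop (nhds 0) := by
  classical
  obtain ⟨sd, hsd⟩ : ∃ sd : ℝ, sd = Real.sqrt d := ⟨_, rfl⟩
  have hd1 : (1 : ℝ) ≤ (d : ℝ) := by exact_mod_cast hd
  have hsd1 : 1 ≤ sd := by
    rw [hsd, show (1 : ℝ) = Real.sqrt 1 from (Real.sqrt_one).symm]
    exact Real.sqrt_le_sqrt hd1
  have hsdpos : 0 < sd := lt_of_lt_of_le one_pos hsd1
  obtain ⟨A, hA⟩ : ∃ A : ℝ, A = M * Real.sqrt d := ⟨_, rfl⟩
  have hApos : 0 < A := by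
    rw [hA, ← hsd]; exact mul_pos hM hsdpos
  have hgrad' : ∀ z, ‖gradient f z‖ ≤ A := by intro z; rw [hA]; exact hgrad z
  obtain ⟨B, hB⟩ : ∃ B : ℝ, B = Real.sqrt (K * d * lam) := ⟨_, rfl⟩
  have hBnn : 0 ≤ B := hB ▸ Real.sqrt_nonneg _
  obtain ⟨P, hP⟩ : ∃ P : ℕ → ℝ, P = fun j => Real.sqrt (ρ j) := ⟨_, rfl⟩
  have hPj : ∀ j, P j = Real.sqrt (ρ j) := fun j => by rw [hP]
  have hPpos : ∀ j, 0 < P j := fun j => (hPj j) ▸ Real.sqrt_pos.2 (hρpos j)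
  have hPsq : ∀ j, P j * P j = ρ j := fun j => by
    rw [hPj j]; exact Real.mul_self_sqrt (hρpos j).le
  -- Δ in terms of sd
  have hΔ' : ∀ k, Δ (k + 1) = sd⁻¹ *
      (‖x k - x (k + 1)‖ + ‖v k - v (k + 1)‖ + ‖u k - u (k + 1)‖) := by
    intro k; rw [hsd]; exact hΔ k
  -- Lipschitz bound on f
  have hfd : ∀ z, ‖fderiv ℝ f z‖ ≤ A := by
    intro z
    have h1 : ‖gradient f z‖ = ‖fderiv ℝ f z‖ := by
      rw [gradient]; exact LinearIsometryEquiv.norm_map _ _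
    rw [← h1]; exact hgrad' z
  have hLip : ∀ a b : EuclideanSpace ℝ (Fin d), f a - f b ≤ A * ‖a - b‖ := by
    intro a b
    have := Convex.norm_image_sub_le_of_norm_fderiv_le
      (fun z _ => (hf z)) (fun z _ => hfd z) convex_univ
      (Set.mem_univ b) (Set.mem_univ a)
    calc f a - f b ≤ ‖f a - f b‖ := le_abs_self _
      _ ≤ A * ‖a - b‖ := this
  -- Lemma 1 : optimality gives a bound
  have h1 : ∀ k, ‖x (k + 1) - v k + u k‖ ≤ 2 * A / ρ k := by
    intro k
    have hz := hx k (v k - u k)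
    have h0 : v k - u k - v k + u k = 0 := by abel
    rw [h0, norm_zero] at hz
    have hlip := hLip (v k - u k) (x (k + 1))
    have heq : v k - u k - x (k + 1) = -(x (k + 1) - v k + u k) := by abel
    rw [heq, norm_neg] at hlip
    have htnn : 0 ≤ ‖x (k + 1) - v k + u k‖ := norm_nonneg _
    have hz' : f (x (k + 1)) + ρ k / 2 * ‖x (k + 1) - v k + u k‖ ^ 2
        ≤ f (v k - u k) := by simpa using hz
    have hq : ρ k / 2 * ‖x (k + 1) - v k + u k‖ ^ 2
        ≤ A * ‖x (k + 1) - v k + u k‖ := by linarith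
    rw [le_div_iff₀ (hρpos k)]
    rcases eq_or_lt_of_le htnn with h | h
    · rw [← h, zero_mul]; linarith
    · nlinarith [hq, h, hρpos k]
  -- Lemma 2 : denoiser bound
  have h2 : ∀ k, ‖u (k + 1)‖ ≤ B / P k := by
    intro k
    have hσpos : 0 < Real.sqrt (lam / ρ k) :=
      Real.sqrt_pos.2 (div_pos hlam (hρpos k))
    have hb := hden _ hσpos (x (k + 1) + u k)
    rw [Real.sq_sqrt (div_pos hlam (hρpos k)).le] at hb
    have heq : u (k + 1) =
        -(Dden (Real.sqrt (lam / ρ k)) (x (k + 1) + u k) - (x (k + 1) + u k)) := by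
      rw [hu k, hv k]; abel
    have hn2 : ‖u (k + 1)‖ ^ 2 ≤ K * d * lam / ρ k := by
      rw [heq, norm_neg]
      calc ‖Dden (Real.sqrt (lam / ρ k)) (x (k + 1) + u k) - (x (k + 1) + u k)‖ ^ 2
          ≤ K * d * (lam / ρ k) := hb
        _ = K * d * lam / ρ k := by ring
    have hKdl : (0:ℝ) ≤ K * d * lam :=
      mul_nonneg (mul_nonneg hK.le (Nat.cast_nonneg d)) hlam.le
    have hiff := Real.le_sqrt (norm_nonneg (u (k + 1)))
      (div_nonneg hKdl (hρpos k).le)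
    have hle : ‖u (k + 1)‖ ≤ Real.sqrt (K * d * lam / ρ k) := hiff.2 hn2
    rwa [Real.sqrt_div hKdl (ρ k), ← hB, ← hPj k] at hle
  -- monotonicity of ρ
  have hρstep_le : ∀ j, 1 ≤ j → ρ j ≤ ρ (j + 1) := by
    intro j hj
    rcases le_or_gt (η * Δ j) (Δ (j + 1)) with h | h
    · rw [hrule1 j hj h]; nlinarith [hρpos j]
    · rw [hrule2 j hj h]
  have hρstep_ge : ∀ j, 1 ≤ j → ρ (j + 1) ≤ γ * ρ j := by
    intro j hj
    rcases le_or_gt (η * Δ j) (Δ (j + 1)) with h | h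
    · rw [hrule1 j hj h]
    · rw [hrule2 j hj h]; nlinarith [hρpos j]
  have hρmono : ∀ i j, 1 ≤ i → i ≤ j → ρ i ≤ ρ j := by
    intro i j hi hij
    induction j with
    | zero => omega
    | succ j ih =>
      rcases Nat.lt_or_ge i (j + 1) with h | h
      · have hij' : i ≤ j := by omega
        have hj1 : 1 ≤ j := by omega
        exact (ih hij').trans (hρstep_le j hj1)
      · have : i = j + 1 := by omega
        rw [this]
  have hPmono : ∀ i j, 1 ≤ i → i ≤ j → P i ≤ P j := by
    intro i j hi hij
    rw [hPj i, hPj j]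
    exact Real.sqrt_le_sqrt (hρmono i j hi hij)
  -- Δ is nonneg beyond index 1
  have hΔnn : ∀ k, 0 ≤ Δ (k + 1) := by
    intro k
    rw [hΔ' k]
    have := norm_nonneg (x k - x (k + 1))
    have := norm_nonneg (v k - v (k + 1))
    have := norm_nonneg (u k - u (k + 1))
    have hsdinv : 0 ≤ sd⁻¹ := inv_nonneg.2 hsdpos.le
    nlinarith
  -- key bound : Δ (k+4) ≤ C / P (k+1)
  obtain ⟨C, hC⟩ : ∃ C : ℝ, C = 4 * A / P 1 + 12 * B := ⟨_, rfl⟩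
  have hCpos : 0 < C := by
    rw [hC]
    have h1 := hPpos 1
    have h2 : 0 < 4 * A / P 1 := div_pos (by linarith) h1
    linarith
  have hkey : ∀ k, Δ (k + 4) ≤ C / P (k + 1) := by
    intro k
    obtain ⟨t, ht⟩ : ∃ t : ℝ, t = 1 / P (k + 1) := ⟨_, rfl⟩
    have htpos : 0 < t := by rw [ht]; exact one_div_pos.2 (hPpos _)
    -- basic bounds
    have nw : ‖x (k + 4) - v (k + 3) + u (k + 3)‖ ≤ (2 * A / P 1) * t := by
      have hh := h1 (k + 3)
      have hb : 2 * A / ρ (k + 3) ≤ (2 * A / P 1) * t := by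
        rw [ht]
        have hρ3 : P 1 * P (k + 1) ≤ ρ (k + 3) := by
          have e1 := hPsq (k + 3)
          have l1 : P 1 ≤ P (k + 3) := hPmono 1 (k + 3) le_rfl (by omega)
          have l2 : P (k + 1) ≤ P (k + 3) := hPmono (k + 1) (k + 3) (by omega) (by omega)
          nlinarith [hPpos 1, hPpos (k + 1), hPpos (k + 3)]
        rw [div_mul_div_comm, mul_one]
        exact div_le_div_of_nonneg_left (by linarith)
          (mul_pos (hPpos 1) (hPpos (k + 1))) hρ3
      exact hh.trans hb
    have hub : ∀ j, k + 1 ≤ j → ‖u (j + 1)‖ ≤ B * t := by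
      intro j hj
      have hPle : P (k + 1) ≤ P j := hPmono (k + 1) j (by omega) hj
      have hle : B / P j ≤ B * t := by
        rw [ht, mul_one_div]
        exact div_le_div_of_nonneg_left hBnn (hPpos (k + 1)) hPle
      exact (h2 j).trans hle
    have nu2 : ‖u (k + 2)‖ ≤ B * t := hub (k + 1) le_rfl
    have nu3 : ‖u (k + 3)‖ ≤ B * t := hub (k + 2) (by omega)
    have nu4 : ‖u (k + 4)‖ ≤ B * t := hub (k + 3) (by omega)
    -- vector identities
    have ex : x (k + 3) - x (k + 4) =
        (u (k + 3) - u (k + 2)) +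
        (u (k + 3) - (x (k + 4) - v (k + 3) + u (k + 3))) := by
      rw [hu (k + 2)]; abel
    have ev : v (k + 3) - v (k + 4) =
        (x (k + 3) - x (k + 4)) + (u (k + 2) - u (k + 3)) +
        (u (k + 4) - u (k + 3)) := by
      rw [hu (k + 3), hu (k + 2)]; abel
    have nx : ‖x (k + 3) - x (k + 4)‖ ≤ (2 * A / P 1) * t + 3 * (B * t) := by
      rw [ex]
      calc ‖(u (k + 3) - u (k + 2)) +
            (u (k + 3) - (x (k + 4) - v (k + 3) + u (k + 3)))‖
          ≤ ‖u (k + 3) - u (k + 2)‖ +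
            ‖u (k + 3) - (x (k + 4) - v (k + 3) + u (k + 3))‖ := norm_add_le _ _
        _ ≤ (‖u (k + 3)‖ + ‖u (k + 2)‖) +
            (‖u (k + 3)‖ + ‖x (k + 4) - v (k + 3) + u (k + 3)‖) :=
              add_le_add (norm_sub_le _ _) (norm_sub_le _ _)
        _ ≤ (B * t + B * t) + (B * t + (2 * A / P 1) * t) := by
              gcongr
        _ = (2 * A / P 1) * t + 3 * (B * t) := by ring
    have nuu : ‖u (k + 3) - u (k + 4)‖ ≤ 2 * (B * t) := by
      calc ‖u (k + 3) - u (k + 4)‖ ≤ ‖u (k + 3)‖ + ‖u (k + 4)‖ := norm_sub_le _ _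
        _ ≤ B * t + B * t := add_le_add nu3 nu4
        _ = 2 * (B * t) := by ring
    have nv : ‖v (k + 3) - v (k + 4)‖ ≤ (2 * A / P 1) * t + 7 * (B * t) := by
      rw [ev]
      calc ‖(x (k + 3) - x (k + 4)) + (u (k + 2) - u (k + 3)) +
            (u (k + 4) - u (k + 3))‖
          ≤ ‖(x (k + 3) - x (k + 4)) + (u (k + 2) - u (k + 3))‖ +
            ‖u (k + 4) - u (k + 3)‖ := norm_add_le _ _
        _ ≤ (‖x (k + 3) - x (k + 4)‖ + ‖u (k + 2) - u (k + 3)‖) +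
            (‖u (k + 4)‖ + ‖u (k + 3)‖) :=
              add_le_add (norm_add_le _ _) (norm_sub_le _ _)
        _ ≤ ((2 * A / P 1) * t + 3 * (B * t) + (‖u (k + 2)‖ + ‖u (k + 3)‖)) +
            (B * t + B * t) := by
              gcongr
              exact norm_sub_le _ _
        _ ≤ ((2 * A / P 1) * t + 3 * (B * t) + (B * t + B * t)) +
            (B * t + B * t) := by gcongr
        _ = (2 * A / P 1) * t + 7 * (B * t) := by ring
    have hΔ4 : Δ (k + 4) = sd⁻¹ *
        (‖x (k + 3) - x (k + 4)‖ + ‖v (k + 3) - v (k + 4)‖ +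
         ‖u (k + 3) - u (k + 4)‖) := hΔ' (k + 3)
    have hsum : ‖x (k + 3) - x (k + 4)‖ + ‖v (k + 3) - v (k + 4)‖ +
         ‖u (k + 3) - u (k + 4)‖ ≤ C * t := by
      have hCt : (2 * A / P 1) * t + 3 * (B * t) + ((2 * A / P 1) * t + 7 * (B * t)) +
          2 * (B * t) = C * t := by rw [hC]; ring
      linarith [nx, nv, nuu]
    have hsdinv : sd⁻¹ ≤ 1 := by
      rw [inv_le_one_iff₀]; right; exact hsd1
    have hsumnn : 0 ≤ C * t := mul_nonneg hCpos.le htpos.le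
    rw [hΔ4]
    calc sd⁻¹ * (‖x (k + 3) - x (k + 4)‖ + ‖v (k + 3) - v (k + 4)‖ +
         ‖u (k + 3) - u (k + 4)‖)
        ≤ 1 * (C * t) := by
          apply mul_le_mul hsdinv hsum (by positivity) zero_le_one
      _ = C / P (k + 1) := by rw [ht]; ring
  -- the contraction recurrence
  have hγpos : (0:ℝ) < γ := lt_trans one_pos hγ
  obtain ⟨sγ, hsγ⟩ : ∃ sγ : ℝ, sγ = Real.sqrt γ := ⟨_, rfl⟩
  have hsγ1 : 1 < sγ := by
    rw [hsγ, show (1:ℝ) = Real.sqrt 1 from (Real.sqrt_one).symm]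
    exact Real.sqrt_lt_sqrt one_pos.le hγ
  have hsγpos : 0 < sγ := lt_trans one_pos hsγ1
  obtain ⟨C2, hC2⟩ : ∃ C2 : ℝ, C2 = C * γ * sγ / (sγ - 1) := ⟨_, rfl⟩
  have hC2pos : 0 < C2 := by
    rw [hC2]
    have h := sub_pos.2 hsγ1
    exact div_pos (mul_pos (mul_pos hCpos hγpos) hsγpos) h
  have hrec : ∀ n, Δ (n + 4) ≤ η * Δ (n + 3) + (C2 / P (n + 3) - C2 / P (n + 4)) := by
    intro n
    rcases le_or_gt (η * Δ (n + 3)) (Δ (n + 4)) with hcase | hcase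
    · -- C1 case
      have hρ4 : ρ (n + 4) = γ * ρ (n + 3) := hrule1 (n + 3) (by omega) hcase
      have hP4 : P (n + 4) = sγ * P (n + 3) := by
        rw [hPj, hPj, hρ4, Real.sqrt_mul hγpos.le, ← hsγ]
      have hp : P (n + 3) ≠ 0 := (hPpos (n + 3)).ne'
      have hs0 : sγ ≠ 0 := hsγpos.ne'
      have hs1 : sγ - 1 ≠ 0 := (sub_pos.2 hsγ1).ne'
      have hdiff : C2 / P (n + 3) - C2 / P (n + 4) = C * γ / P (n + 3) := by
        rw [hP4, hC2]
        field_simp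
      rw [hdiff]
      -- P (n+3) ≤ γ * P (n+1)
      have hP31 : P (n + 3) ≤ γ * P (n + 1) := by
        have hr1 : ρ (n + 3) ≤ γ * ρ (n + 2) := hρstep_ge (n + 2) (by omega)
        have hr2 : ρ (n + 2) ≤ γ * ρ (n + 1) := hρstep_ge (n + 1) (by omega)
        have hle : ρ (n + 3) ≤ γ ^ 2 * ρ (n + 1) := by nlinarith [hρpos (n + 2)]
        have hs : P (n + 3) ≤ Real.sqrt (γ ^ 2 * ρ (n + 1)) := by
          rw [hPj]
          exact Real.sqrt_le_sqrt hle
        rwa [Real.sqrt_mul (by positivity), Real.sqrt_sq hγpos.le, ← hPj] at hs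
      have hkey' : Δ (n + 4) ≤ C / P (n + 1) := hkey n
      have hfinal : C / P (n + 1) ≤ C * γ / P (n + 3) := by
        rw [div_le_div_iff₀ (hPpos (n + 1)) (hPpos (n + 3))]
        nlinarith [hCpos.le, hPpos (n + 1), hPpos (n + 3)]
      have hnn : 0 ≤ η * Δ (n + 3) := mul_nonneg hη0.le (hΔnn (n + 2))
      linarith [hkey'.trans hfinal]
    · -- C2 case
      have hρ4 : ρ (n + 4) = ρ (n + 3) := hrule2 (n + 3) (by omega) hcase
      have hz : C2 / P (n + 3) - C2 / P (n + 4) = 0 := by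
        rw [hPj (n + 4), hρ4, ← hPj (n + 3)]; ring
      rw [hz]
      linarith [hcase]
  -- summability of Δ (· + 3)
  have hsum3 : Summable (fun n => Δ (n + 3)) := by
    apply summable_of_contract_aux (fun n => Δ (n + 3)) (fun n => C2 / P (n + 3)) η
      hη0.le hη1 (fun n => hΔnn (n + 2))
      (fun n => div_nonneg hC2pos.le (hPpos (n + 3)).le)
    intro n
    exact hrec n
  -- each coordinate sequence is Cauchy
  have hnormle : ∀ (w : ℕ → EuclideanSpace ℝ (Fin d)),
      (∀ k, ‖w k - w (k + 1)‖ ≤ ‖x k - x (k + 1)‖ + ‖v k - v (k + 1)‖ +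
        ‖u k - u (k + 1)‖) → ∃ wl, Filter.Tendsto w Filter.atTop (nhds wl) := by
    intro w hw
    have hd1' : ∀ k, ‖w k - w (k + 1)‖ ≤ sd * Δ (k + 1) := by
      intro k
      have heq : sd * Δ (k + 1) = ‖x k - x (k + 1)‖ + ‖v k - v (k + 1)‖ +
          ‖u k - u (k + 1)‖ := by
        rw [hΔ' k, ← mul_assoc, mul_inv_cancel₀ (ne_of_gt hsdpos), one_mul]
      rw [heq]
      exact hw k
    have hs2 : Summable (fun n => dist (w (n + 2)) (w (n + 3))) := by
      apply Summable.of_nonneg_of_le (fun n => dist_nonneg)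
        (fun n => ?_) (hsum3.mul_left sd)
      rw [dist_eq_norm]
      exact hd1' (n + 2)
    have hs : Summable (fun n => dist (w n) (w (n + 1))) :=
      (summable_nat_add_iff 2).1 hs2
    have hcauchy : CauchySeq w := cauchySeq_of_summable_dist hs
    exact cauchySeq_tendsto_of_complete hcauchy
  obtain ⟨xl, hxl⟩ := hnormle x (fun k => by
    linarith [norm_nonneg (v k - v (k + 1)), norm_nonneg (u k - u (k + 1))])
  obtain ⟨vl, hvl⟩ := hnormle v (fun k => by
    linarith [norm_nonneg (x k - x (k + 1)), norm_nonneg (u k - u (k + 1))])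
  obtain ⟨ul, hul⟩ := hnormle u (fun k => by
    linarith [norm_nonneg (x k - x (k + 1)), norm_nonneg (v k - v (k + 1))])
  refine ⟨⟨xl, vl, ul⟩, ?_⟩
  have hx0 : Filter.Tendsto (fun k => ‖x k - xl‖) Filter.atTop (nhds 0) :=
    tendsto_iff_norm_sub_tendsto_zero.1 hxl
  have hv0 : Filter.Tendsto (fun k => ‖v k - vl‖) Filter.atTop (nhds 0) :=
    tendsto_iff_norm_sub_tendsto_zero.1 hvl
  have hu0 : Filter.Tendsto (fun k => ‖u k - ul‖) Filter.atTop (nhds 0) :=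
    tendsto_iff_norm_sub_tendsto_zero.1 hul
  have hfin := (((hx0.add hv0).add hu0).const_mul ((Real.sqrt d)⁻¹))
  simpa using hfin
end
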